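/- arXiv:1212.6925 — 4 statements merged into one kernel-verified Lean document; each statement's English description precedes it below -/
import Mathlib

section
/- Let X be a random variable on [n] with Shannon entropy H(X) ≥ log₂ n − δ, and let S ⊆ [n]. Set Δ = sqrt(4δn/|S|). If Δ ≤ 1/10, then Pr[X ∈ S] ≥ (|S|/n)·(1 − Δ). -/
/-!
Let `q = Pr[X ∈ S]` and `r = |S|/n`. The entropy deficit `log n - H(X)` (in nats) equals
`(1/n) ∑ᵢ klFun (n pᵢ)`, the divergence of `X` from the uniform distribution. Jensen's inequality
for the convex function `klFun` on `S`, and `klFun ≥ 0` off `S`, bound it below by `r klFun (q/r)`.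
Since `klFun x ≥ (1 - x)² / 2` on `[0, 1]`, this gives `(r - q)² ≤ 2 r δ log 2 ≤ (r Δ)²`.
-/

open Real Finset

theorem ConvexOn.card_mul_map_avg_le_sum {ι : Type*} {s : Set ℝ} {f : ℝ → ℝ}
    (hf : ConvexOn ℝ s f) (T : Finset ι) (hT : T.Nonempty) (x : ι → ℝ) (hx : ∀ i ∈ T, x i ∈ s) :
    #T * f ((∑ i ∈ T, x i) / #T) ≤ ∑ i ∈ T, f (x i) := by
  have hT' : (0 : ℝ) < #T := by exact_mod_cast hT.card_pos
  have hJensen := hf.map_sum_le (t := T) (w := fun _ ↦ (#T : ℝ)⁻¹) (p := x)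
    (fun _ _ ↦ by positivity) (by simp [hT'.ne']) hx
  simp only [smul_eq_mul, ← mul_sum] at hJensen
  rw [inv_mul_eq_div, inv_mul_eq_div, le_div_iff₀ hT', mul_comm] at hJensen
  exact hJensen

namespace InformationTheory

theorem card_mul_klFun_avg_le_sum_klFun {ι : Type*} [Fintype ι] (x : ι → ℝ) (hx : ∀ i, 0 ≤ x i)
    (S : Finset ι) : #S * klFun ((∑ i ∈ S, x i) / #S) ≤ ∑ i, klFun (x i) := by
  calc #S * klFun ((∑ i ∈ S, x i) / #S) ≤ ∑ i ∈ S, klFun (x i) := by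
        rcases S.eq_empty_or_nonempty with rfl | hS
        · simp
        · exact convexOn_klFun.card_mul_map_avg_le_sum S hS x fun i _ ↦ hx i
    _ ≤ ∑ i, klFun (x i) := sum_le_univ_sum_of_nonneg fun i ↦ klFun_nonneg (hx i)

theorem sum_klFun_card_mul_eq {ι : Type*} [Fintype ι] (p : ι → ℝ) (hp : ∑ i, p i = 1) :
    ∑ i, klFun (Fintype.card ι * p i) =
      Fintype.card ι * (log (Fintype.card ι) - ∑ i, negMulLog (p i)) := by
  have hterm : ∀ y, klFun y = 1 - y - negMulLog y := fun y ↦ by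
    rw [klFun_apply, negMulLog]; ring
  simp only [hterm, negMulLog_mul, sum_sub_distrib, sum_add_distrib, ← mul_sum, ← sum_mul, hp]
  simp [negMulLog]
  ring

theorem one_sub_sq_div_two_le_klFun {x : ℝ} (hx0 : 0 ≤ x) (hx1 : x ≤ 1) :
    (1 - x) ^ 2 / 2 ≤ klFun x := by
  set g : ℝ → ℝ := fun y ↦ klFun y - (1 - y) ^ 2 / 2
  have hg : ∀ y, y ≠ 0 → HasDerivAt g (log y + (1 - y)) y := fun y hy ↦ by
    have hsq : HasDerivAt (fun y ↦ (1 - y) ^ 2 / 2) (-(1 - y)) y :=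
      ((((hasDerivAt_id' y).const_sub 1).fun_pow 2).div_const 2).congr_deriv (by ring)
    exact ((hasDerivAt_klFun hy).sub hsq).congr_deriv (by ring)
  have hanti : AntitoneOn g (Set.Icc 0 1) := by
    refine antitoneOn_of_deriv_nonpos (convex_Icc 0 1) ?_ ?_ ?_
    · exact (continuous_klFun.sub (by fun_prop)).continuousOn
    · intro y hy
      rw [interior_Icc] at hy
      exact (hg y hy.1.ne').differentiableAt.differentiableWithinAt
    · intro y hy
      rw [interior_Icc] at hy
      rw [(hg y hy.1.ne').deriv]
      linarith [log_le_sub_one_of_pos hy.1]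
  have hg_ge : g 1 ≤ g x := hanti ⟨hx0, hx1⟩ ⟨zero_le_one, le_rfl⟩ hx1
  simp only [g, klFun_one] at hg_ge
  linarith

theorem mul_one_sub_sqrt_le_of_mul_klFun_le {q r ε : ℝ} (hr : 0 < r) (hq : 0 ≤ q)
    (h : r * klFun (q / r) ≤ ε) : r * (1 - √(2 * ε / r)) ≤ q := by
  rcases le_total r q with hrq | hqr
  · exact (mul_le_of_le_one_right hr.le (by linarith [sqrt_nonneg (2 * ε / r)])).trans hrq
  have hx1 : q / r ≤ 1 := (div_le_one hr).mpr hqr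
  have hsq : (1 - q / r) ^ 2 ≤ 2 * ε / r := by
    rw [le_div_iff₀ hr]
    nlinarith [one_sub_sq_div_two_le_klFun (div_nonneg hq hr.le) hx1]
  have hgap : 1 - q / r ≤ √(2 * ε / r) := (le_abs_self _).trans (abs_le_sqrt hsq)
  calc r * (1 - √(2 * ε / r)) ≤ r * (q / r) := by gcongr; linarith
    _ = q := mul_div_cancel₀ q hr.ne'

end InformationTheory

open InformationTheory

theorem stmt0_general (n : ℕ) (hn : 0 < n) (p : Fin n → ℝ)
    (hp0 : ∀ i, 0 ≤ p i) (hp1 : ∑ i, p i = 1)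
    (δ : ℝ) (hδ : 0 ≤ δ)
    (hH : (∑ i, Real.negMulLog (p i)) / Real.log 2 ≥ Real.logb 2 n - δ)
    (S : Finset (Fin n)) (hS : S.Nonempty)
    (Δ : ℝ) (hΔ : Δ = Real.sqrt (4 * δ * n / S.card)) :
    ∑ i ∈ S, p i ≥ ((S.card : ℝ) / n) * (1 - Δ) := by
  have hn' : (0 : ℝ) < n := by exact_mod_cast hn
  have hs : (0 : ℝ) < #S := by exact_mod_cast hS.card_pos
  have hlog2 : 0 < log 2 := log_pos one_lt_two
  have hdeficit : log n - ∑ i, negMulLog (p i) ≤ δ * log 2 := by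
    rw [ge_iff_le, logb, le_div_iff₀ hlog2, sub_mul, div_mul_cancel₀ _ hlog2.ne'] at hH
    linarith
  have hkl : #S / n * klFun ((∑ i ∈ S, p i) / (#S / n)) ≤ δ * log 2 := by
    have hsum := sum_klFun_card_mul_eq p hp1
    have hjensen := card_mul_klFun_avg_le_sum_klFun (fun i ↦ n * p i)
      (fun i ↦ mul_nonneg hn'.le (hp0 i)) S
    simp only [Fintype.card_fin] at hsum
    rw [hsum, ← mul_sum] at hjensen
    rw [div_div_eq_mul_div, mul_comm _ (n : ℝ), div_mul_eq_mul_div, div_le_iff₀ hn']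
    linarith [mul_le_mul_of_nonneg_left hdeficit hn'.le]
  have hsqrt : √(2 * (δ * log 2) / (#S / n)) ≤ Δ := by
    rw [hΔ, div_div_eq_mul_div]
    have hlog2_le : log 2 ≤ 1 := by linarith [log_two_lt_d9]
    gcongr
    · norm_num
    · exact mul_le_of_le_one_right hδ hlog2_le
  calc (#S / n : ℝ) * (1 - Δ) ≤ #S / n * (1 - √(2 * (δ * log 2) / (#S / n))) := by gcongr
    _ ≤ ∑ i ∈ S, p i :=
      mul_one_sub_sqrt_le_of_mul_klFun_le (by positivity) (sum_nonneg fun i _ ↦ hp0 i) hkl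

/-- If `X` is a random variable on `[n]` (with mass function `p`) with
entropy `H(X) ≥ log₂ n - δ`, `S ⊆ [n]`, and `Δ = sqrt(4δn/|S|) ≤ 1/10`, then
`Pr[X ∈ S] ≥ (|S|/n)(1 - Δ)`. -/
theorem stmt0 (n : ℕ) (hn : 0 < n) (p : Fin n → ℝ)
    (hp0 : ∀ i, 0 ≤ p i) (hp1 : ∑ i, p i = 1)
    (δ : ℝ) (hδ : 0 ≤ δ)
    (hH : (∑ i, Real.negMulLog (p i)) / Real.log 2 ≥ Real.logb 2 n - δ)
    (S : Finset (Fin n)) (hS : S.Nonempty)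
    (Δ : ℝ) (hΔ : Δ = Real.sqrt (4 * δ * n / S.card))
    (hΔ10 : Δ ≤ 1 / 10) :
    ∑ i ∈ S, p i ≥ ((S.card : ℝ) / n) * (1 - Δ) :=
  stmt0_general n hn p hp0 hp1 δ hδ hH S hS Δ hΔ
end

section
/- Let X and Y be independent random variables on [n] with H(X) ≥ log₂ n − δ and H(Y) ≥ log₂ n − δ, where δ = 1/48². Then Pr[X = Y] ≥ 1/(8n). -/
/-!
Writing `N = #ι`, the entropy gap of a distribution `p` is an average of the convex function
`klFun y = y log y + 1 - y ≥ 0`: `N (log N - H(p)) = ∑ i, klFun (N pᵢ)`. Since `klFun` decreases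
on `[0, 1]` and `klFun (1/2) = (1 - log 2)/2 > 1/8`, every index with `pᵢ ≤ 1/(2N)` costs at
least `1/8`, so an entropy gap of at most `log 2 / 48² < 1/32` nats leaves at most `N/4` such
indices. Hence on at least half of `[n]` both `pᵢ` and `qᵢ` exceed `1/(2n)`, and
`∑ pᵢ qᵢ ≥ (n/2) (1/(2n))² = 1/(8n)`.
-/

open Real InformationTheory Finset

lemma antitoneOn_klFun : AntitoneOn klFun (Set.Icc 0 1) := by
  refine antitoneOn_of_deriv_nonpos (convex_Icc 0 1) continuous_klFun.continuousOn ?_ ?_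
  · rw [interior_Icc]
    exact fun x hx => (hasDerivAt_klFun hx.1.ne').differentiableAt.differentiableWithinAt
  · rw [interior_Icc, deriv_klFun]
    exact fun x hx => log_nonpos hx.1.le hx.2.le

lemma klFun_half : klFun (1 / 2) = (1 - log 2) / 2 := by
  rw [klFun_apply, one_div, log_inv]
  ring

lemma one_div_eight_le_klFun {y : ℝ} (hy0 : 0 ≤ y) (hy : y ≤ 1 / 2) : 1 / 8 ≤ klFun y := by
  have hlog2 := log_two_lt_d9
  calc (1 : ℝ) / 8 ≤ klFun (1 / 2) := by rw [klFun_half]; norm_num at hlog2 ⊢; linarith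
    _ ≤ klFun y := antitoneOn_klFun ⟨hy0, by linarith⟩ (by norm_num) hy

section Distribution

variable {ι : Type*} [Fintype ι]

lemma sum_klFun_card_mul (p : ι → ℝ) (hp1 : ∑ i, p i = 1) :
    ∑ i, klFun (Fintype.card ι * p i) =
      Fintype.card ι * (log (Fintype.card ι) - ∑ i, negMulLog (p i)) := by
  set N : ℝ := (Fintype.card ι : ℝ)
  have hterm : ∀ i, klFun (N * p i) = N * log N * p i - N * negMulLog (p i) + 1 - N * p i := by
    intro i
    have h := negMulLog_mul N (p i)
    simp only [klFun_apply, negMulLog] at h ⊢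
    linear_combination -h
  simp only [hterm, sum_sub_distrib, sum_add_distrib, ← mul_sum, hp1, sum_const, card_univ,
    nsmul_eq_mul]
  ring

lemma card_small_le_entropy_gap (p : ι → ℝ) (hp0 : ∀ i, 0 ≤ p i) (hp1 : ∑ i, p i = 1) :
    (#{i | p i ≤ 1 / (2 * Fintype.card ι)} : ℝ) ≤
      8 * Fintype.card ι * (log (Fintype.card ι) - ∑ i, negMulLog (p i)) := by
  set N : ℝ := (Fintype.card ι : ℝ)
  have hN : 0 ≤ N := Nat.cast_nonneg _
  have hsmall : ∀ i ∈ ({i | p i ≤ 1 / (2 * N)} : Finset ι), 1 / 8 ≤ klFun (N * p i) := by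
    intro i hi
    have hNc : N * (1 / (2 * N)) ≤ 1 / 2 := by
      rcases hN.eq_or_lt with hN0 | hNpos
      · rw [← hN0]; norm_num
      · rw [mul_one_div, div_mul_cancel_right₀ hNpos.ne', one_div]
    exact one_div_eight_le_klFun (mul_nonneg hN (hp0 i))
      ((mul_le_mul_of_nonneg_left (mem_filter.mp hi).2 hN).trans hNc)
  have hcount := card_nsmul_le_sum _ _ _ hsmall
  rw [nsmul_eq_mul] at hcount
  calc (#{i | p i ≤ 1 / (2 * N)} : ℝ)
        ≤ 8 * ∑ i ∈ {i | p i ≤ 1 / (2 * N)}, klFun (N * p i) := by linarith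
    _ ≤ 8 * ∑ i, klFun (N * p i) := by
        gcongr
        · exact fun i _ _ => klFun_nonneg (mul_nonneg hN (hp0 i))
        · exact subset_univ _
    _ = _ := by rw [sum_klFun_card_mul p hp1, mul_assoc]

lemma card_sub_card_small_mul_sq_le_sum_mul (p q : ι → ℝ) (hp0 : ∀ i, 0 ≤ p i)
    (hq0 : ∀ i, 0 ≤ q i) {c : ℝ} (hc : 0 ≤ c) :
    ((Fintype.card ι : ℝ) - #{i | p i ≤ c} - #{i | q i ≤ c}) * c ^ 2 ≤ ∑ i, p i * q i := by
  classical
  set T : Finset ι := {i | c < p i ∧ c < q i}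
  have hcover : univ ⊆ T ∪ ({i | p i ≤ c} : Finset ι) ∪ ({i | q i ≤ c} : Finset ι) := by
    intro i _
    rcases lt_or_ge c (p i) with hp | hp <;> rcases lt_or_ge c (q i) with hq | hq <;>
      simp [T, hp, hq]
  have hcard : (Fintype.card ι : ℝ) ≤ #T + #{i | p i ≤ c} + #{i | q i ≤ c} := by
    rw [← card_univ]
    exact_mod_cast (card_le_card hcover).trans
      ((card_union_le _ _).trans (Nat.add_le_add_right (card_union_le _ _) _))
  have hT : ∀ i ∈ T, c ^ 2 ≤ p i * q i := by
    intro i hi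
    obtain ⟨hpi, hqi⟩ := (mem_filter.mp hi).2
    rw [sq]
    exact mul_le_mul hpi.le hqi.le hc (hc.trans hpi.le)
  calc ((Fintype.card ι : ℝ) - #{i | p i ≤ c} - #{i | q i ≤ c}) * c ^ 2 ≤ #T * c ^ 2 := by
        gcongr; linarith
    _ ≤ ∑ i ∈ T, p i * q i := by rw [← nsmul_eq_mul]; exact card_nsmul_le_sum _ _ _ hT
    _ ≤ ∑ i, p i * q i :=
        sum_le_sum_of_subset_of_nonneg (subset_univ _) fun i _ _ => mul_nonneg (hp0 i) (hq0 i)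

end Distribution

theorem stmt1_general (n : ℕ) (p q : Fin n → ℝ)
    (hp0 : ∀ i, 0 ≤ p i) (hp1 : ∑ i, p i = 1)
    (hq0 : ∀ i, 0 ≤ q i) (hq1 : ∑ i, q i = 1)
    (hHp : (∑ i, Real.negMulLog (p i)) / Real.log 2 ≥ Real.logb 2 n - 1 / 48 ^ 2)
    (hHq : (∑ i, Real.negMulLog (q i)) / Real.log 2 ≥ Real.logb 2 n - 1 / 48 ^ 2) :
    ∑ i, p i * q i ≥ 1 / (8 * n) := by
  have hlog2 : 0 < log 2 ∧ log 2 < 1 := ⟨log_pos one_lt_two, log_two_lt_d9.trans (by norm_num)⟩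
  have hsmall : ∀ r : Fin n → ℝ, (∀ i, 0 ≤ r i) → ∑ i, r i = 1 →
      (∑ i, negMulLog (r i)) / log 2 ≥ logb 2 n - 1 / 48 ^ 2 →
      (#{i | r i ≤ 1 / (2 * n)} : ℝ) ≤ n / 4 := by
    intro r hr0 hr1 hH
    have hgap : log n - ∑ i, negMulLog (r i) ≤ 1 / 48 ^ 2 := by
      rw [ge_iff_le, le_div_iff₀ hlog2.1, logb, sub_mul, div_mul_cancel₀ _ hlog2.1.ne'] at hH
      linarith
    calc (#{i | r i ≤ 1 / (2 * n)} : ℝ) ≤ 8 * n * (log n - ∑ i, negMulLog (r i)) := by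
          simpa using card_small_le_entropy_gap r hr0 hr1
      _ ≤ 8 * n * (1 / 48 ^ 2) := by gcongr
      _ ≤ n / 4 := by linarith [(Nat.cast_nonneg n : (0 : ℝ) ≤ n)]
  have hpq := card_sub_card_small_mul_sq_le_sum_mul p q hp0 hq0
    (by positivity : (0 : ℝ) ≤ 1 / (2 * n))
  rw [Fintype.card_fin] at hpq
  calc 1 / (8 * (n : ℝ)) = (n - n / 4 - n / 4) * (1 / (2 * n)) ^ 2 := by
        rcases n.eq_zero_or_pos with rfl | hn
        · simp
        · field_simp; ring
    _ ≤ _ := by gcongr <;> linarith [hsmall p hp0 hp1 hHp, hsmall q hq0 hq1 hHq]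
    _ ≤ _ := hpq

/-- If `X, Y` are independent random variables on `[n]` (mass functions
`p, q`) with entropies at least `log₂ n - 1/48²`, then `Pr[X = Y] ≥ 1/(8n)`. -/
theorem stmt1 (n : ℕ) (hn : 0 < n) (p q : Fin n → ℝ)
    (hp0 : ∀ i, 0 ≤ p i) (hp1 : ∑ i, p i = 1)
    (hq0 : ∀ i, 0 ≤ q i) (hq1 : ∑ i, q i = 1)
    (hHp : (∑ i, Real.negMulLog (p i)) / Real.log 2 ≥ Real.logb 2 n - 1 / 48 ^ 2)
    (hHq : (∑ i, Real.negMulLog (q i)) / Real.log 2 ≥ Real.logb 2 n - 1 / 48 ^ 2) :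
    ∑ i, p i * q i ≥ 1 / (8 * n) :=
  stmt1_general n p q hp0 hp1 hq0 hq1 hHp hHq
end

section
/- Let X and Y be independent random variables on [n] with n ≥ 4, and suppose H(X) ≥ log₂ n − δ and H(Y) ≥ log₂ n − δ where δ = 1/48². Then Pr[X ≠ Y] ≥ 1/4. -/
/-!
An entropy deficit `ε = log n - H(Y)` (in nats) caps every atom of `Y`: splitting off the atom `j`
and bounding the entropy of the rest by that of the uniform distribution (Jensen) gives
`H(Y) ≤ h(q j) + (1 - q j) log n ≤ log 2 + (1 - q j) log n`, hence `q j log n ≤ log 2 + ε`.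
For `n ≥ 4` and `ε = δ log 2` this forces `q j ≤ 3/4`, so `Pr[X = Y] = ∑ p i q i ≤ 3/4`.
-/

open Real Finset

namespace Real

lemma sum_negMulLog_le {ι : Type*} (s : Finset ι) (w : ι → ℝ) (hw : ∀ i ∈ s, 0 ≤ w i) :
    ∑ i ∈ s, negMulLog (w i) ≤ negMulLog (∑ i ∈ s, w i) + (∑ i ∈ s, w i) * log #s := by
  rcases s.eq_empty_or_nonempty with rfl | hs
  · simp
  have hk : (0 : ℝ) < #s := by exact_mod_cast hs.card_pos
  have jensen := concaveOn_negMulLog.le_map_sum (t := s) (w := fun _ ↦ (#s : ℝ)⁻¹) (p := w)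
    (fun _ _ ↦ by positivity) (by simp [hk.ne']) hw
  simp only [smul_eq_mul, ← mul_sum] at jensen
  rw [mul_comm, negMulLog_mul, negMulLog, log_inv] at jensen
  have := mul_le_mul_of_nonneg_left jensen hk.le
  field_simp at this
  linarith

lemma sum_negMulLog_le_binEntropy_add {ι : Type*} [Fintype ι] [DecidableEq ι] (q : ι → ℝ)
    (hq0 : ∀ i, 0 ≤ q i) (hq1 : ∑ i, q i = 1) (j : ι) :
    ∑ i, negMulLog (q i) ≤ binEntropy (q j) + (1 - q j) * log (Fintype.card ι) := by
  have hrest : ∑ i ∈ univ.erase j, q i = 1 - q j := by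
    rw [← hq1, ← add_sum_erase univ q (mem_univ j)]
    ring
  have hqj : q j ≤ 1 := hq1 ▸ single_le_sum (fun i _ ↦ hq0 i) (mem_univ j)
  have hlog : log #(univ.erase j) ≤ log (Fintype.card ι) := by
    rcases Nat.eq_zero_or_pos #(univ.erase j) with h | h
    · rw [h, Nat.cast_zero, log_zero]
      exact log_nonneg (by exact_mod_cast Fintype.card_pos_iff.mpr ⟨j⟩)
    · exact log_le_log (by exact_mod_cast h) (by exact_mod_cast card_le_univ _)
  have := sum_negMulLog_le (univ.erase j) q (fun i _ ↦ hq0 i)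
  rw [hrest] at this
  rw [← add_sum_erase univ _ (mem_univ j), binEntropy_eq_negMulLog_add_negMulLog_one_sub]
  nlinarith [mul_le_mul_of_nonneg_left hlog (sub_nonneg.mpr hqj)]

lemma mul_log_card_le_of_log_card_sub_le {ι : Type*} [Fintype ι] (q : ι → ℝ)
    (hq0 : ∀ i, 0 ≤ q i) (hq1 : ∑ i, q i = 1) {ε : ℝ}
    (hH : log (Fintype.card ι) - ε ≤ ∑ i, negMulLog (q i)) (j : ι) :
    q j * log (Fintype.card ι) ≤ log 2 + ε := by
  classical
  have := sum_negMulLog_le_binEntropy_add q hq0 hq1 j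
  linarith [binEntropy_le_log_two (p := q j)]

end Real

theorem stmt2_general (n : ℕ) (hn : 4 ≤ n) (p q : Fin n → ℝ)
    (hp0 : ∀ i, 0 ≤ p i) (hp1 : ∑ i, p i = 1)
    (hq0 : ∀ i, 0 ≤ q i) (hq1 : ∑ i, q i = 1)
    (hHq : (∑ i, Real.negMulLog (q i)) / Real.log 2 ≥ Real.logb 2 n - 1 / 48 ^ 2) :
    1 - ∑ i, p i * q i ≥ 1 / 4 := by
  have hlog2 : 0 < log 2 := log_pos one_lt_two
  have hHq_nats : log (Fintype.card (Fin n)) - 1 / 48 ^ 2 * log 2 ≤ ∑ i, negMulLog (q i) := by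
    rw [ge_iff_le, le_div_iff₀ hlog2, logb, sub_mul, div_mul_cancel₀ _ hlog2.ne'] at hHq
    rwa [Fintype.card_fin]
  have hlogn : 2 * log 2 ≤ log n := by
    rw [← log_rpow two_pos]
    exact log_le_log (by positivity) (by norm_num; exact_mod_cast hn)
  have hq_le : ∀ j, q j ≤ 3 / 4 := fun j ↦ by
    have := mul_log_card_le_of_log_card_sub_le q hq0 hq1 hHq_nats j
    rw [Fintype.card_fin] at this
    nlinarith [mul_le_mul_of_nonneg_left hlogn (hq0 j)]
  have : ∑ i, p i * q i ≤ 3 / 4 :=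
    calc ∑ i, p i * q i ≤ ∑ i, p i * (3 / 4) :=
          sum_le_sum fun i _ ↦ mul_le_mul_of_nonneg_left (hq_le i) (hp0 i)
      _ = 3 / 4 := by rw [← sum_mul, hp1, one_mul]
  linarith

/-- If `n ≥ 4` and `X, Y` are independent random variables on `[n]` with
entropies at least `log₂ n - 1/48²`, then `Pr[X ≠ Y] ≥ 1/4`. -/
theorem stmt2 (n : ℕ) (hn : 4 ≤ n) (p q : Fin n → ℝ)
    (hp0 : ∀ i, 0 ≤ p i) (hp1 : ∑ i, p i = 1)
    (hq0 : ∀ i, 0 ≤ q i) (hq1 : ∑ i, q i = 1)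
    (hHp : (∑ i, Real.negMulLog (p i)) / Real.log 2 ≥ Real.logb 2 n - 1 / 48 ^ 2)
    (hHq : (∑ i, Real.negMulLog (q i)) / Real.log 2 ≥ Real.logb 2 n - 1 / 48 ^ 2) :
    1 - ∑ i, p i * q i ≥ 1 / 4 :=
  stmt2_general n hn p q hp0 hp1 hq0 hq1 hHq
end

section
/- Let P and Q be probability distributions on ℕ with KL-divergence D(P‖Q) = a < ∞, and let ε ∈ (0,1). Define Good = {i ∈ ℕ : P(i)·2^{−(a+1)/ε} ≤ Q(i)}. If X is distributed according to P, then Pr[X ∈ Good] ≥ 1 − ε. -/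
/-!
Split `D(P‖Q) = a` over the good set and its complement. Off the good set `log₂ (P i / Q i)`
exceeds `(a + 1) / ε`, so that part of the sum is at least `(a + 1) / ε · Pr[X ∉ Good]`. On any
set the summands are at least `-Q i` (because `x log₂ x ≥ -1 / (e ln 2) > -1`), so the rest of the
sum is at least `-1`. Hence `a ≥ (a + 1) / ε · Pr[X ∉ Good] - 1`, and `a ≥ 0` (Gibbs) gives
`Pr[X ∉ Good] ≤ ε`.
-/

open Real

noncomputable def klTerm (p q : ℝ) : ℝ := if p = 0 then 0 else p * logb 2 (p / q)

lemma summable_of_tsum_eq_one {ι : Type*} {f : ι → ℝ} (h : ∑' i, f i = 1) : Summable f := by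
  by_contra hf
  simp [tsum_eq_zero_of_not_summable hf] at h

lemma pos_of_absolutelyContinuous {p q : ℝ} (hq : 0 ≤ q) (hqp : q = 0 → p = 0) (hp : p ≠ 0) :
    0 < q :=
  hq.lt_of_ne fun h => hp (hqp h.symm)

/-- The tangent-line bound `log x ≤ x - 1` at `x = t q / p`. -/
lemma div_log_two_le_klTerm {p q t : ℝ} (hp : 0 ≤ p) (hq : 0 ≤ q) (hqp : q = 0 → p = 0)
    (ht : 0 < t) :
    (p * log t + p - t * q) / log 2 ≤ klTerm p q := by
  rcases hp.eq_or_lt with rfl | hp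
  · simp only [klTerm, if_true, zero_mul, zero_add, zero_sub]
    exact div_nonpos_of_nonpos_of_nonneg (by nlinarith) (log_nonneg one_le_two)
  have hq : 0 < q := pos_of_absolutelyContinuous hq hqp hp.ne'
  rw [klTerm, if_neg hp.ne', logb, div_le_iff₀ (log_pos one_lt_two), ← mul_div_assoc,
    div_mul_cancel₀ _ (log_pos one_lt_two).ne']
  have htan := log_le_sub_one_of_pos (show 0 < t * q / p by positivity)
  rw [log_div (by positivity) hp.ne', log_mul ht.ne' hq.ne'] at htan
  rw [log_div hp.ne' hq.ne']
  have := mul_le_mul_of_nonneg_left htan hp.le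
  rw [show p * (t * q / p - 1) = t * q - p by field_simp] at this
  linarith

lemma sub_div_log_two_le_klTerm {p q : ℝ} (hp : 0 ≤ p) (hq : 0 ≤ q) (hqp : q = 0 → p = 0) :
    (p - q) / log 2 ≤ klTerm p q := by
  simpa using div_log_two_le_klTerm hp hq hqp one_pos

lemma neg_le_klTerm {p q : ℝ} (hp : 0 ≤ p) (hq : 0 ≤ q) (hqp : q = 0 → p = 0) :
    -q ≤ klTerm p q := by
  refine le_trans ?_ (div_log_two_le_klTerm hp hq hqp one_half_pos)
  have hl1 : log 2 < 1 := by linarith [log_two_lt_d9]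
  have hl2 : 1 / 2 < log 2 := by linarith [log_two_gt_d9]
  rw [le_div_iff₀ (by linarith), one_div, log_inv]
  nlinarith

lemma neg_mul_le_klTerm_of_lt {p q s : ℝ} (hq : 0 ≤ q) (hqp : q = 0 → p = 0)
    (h : q < p * 2 ^ s) : -s * p ≤ klTerm p q := by
  have hp : 0 < p := pos_of_mul_pos_left (hq.trans_lt h) (rpow_pos_of_pos two_pos s).le
  have hq : 0 < q := pos_of_absolutelyContinuous hq hqp hp.ne'
  rw [klTerm, if_neg hp.ne', mul_comm]
  refine mul_le_mul_of_nonneg_left ((lt_logb_iff_rpow_lt one_lt_two (by positivity)).2 ?_).le hp.le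
  rw [lt_div_iff₀ hq, rpow_neg zero_le_two, ← div_eq_inv_mul, div_lt_iff₀ (by positivity)]
  exact h

section

variable {ι : Type*} {P Q : ι → ℝ}

lemma tsum_klTerm_nonneg (hP0 : ∀ i, 0 ≤ P i) (hQ0 : ∀ i, 0 ≤ Q i)
    (habs : ∀ i, Q i = 0 → P i = 0) (hP : Summable P) (hQ : Summable Q)
    (hPQ : ∑' i, P i = ∑' i, Q i) (hf : Summable fun i => klTerm (P i) (Q i)) :
    0 ≤ ∑' i, klTerm (P i) (Q i) := by
  have hle := ((hP.sub hQ).div_const (log 2)).tsum_le_tsum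
    (fun i => sub_div_log_two_le_klTerm (hP0 i) (hQ0 i) (habs i)) hf
  rwa [tsum_div_const, hP.tsum_sub hQ, hPQ, sub_self, zero_div] at hle

lemma neg_one_le_tsum_subtype_klTerm (hP0 : ∀ i, 0 ≤ P i) (hQ0 : ∀ i, 0 ≤ Q i)
    (habs : ∀ i, Q i = 0 → P i = 0) (hQ1 : ∑' i, Q i = 1)
    (hf : Summable fun i => klTerm (P i) (Q i)) (S : Set ι) :
    -1 ≤ ∑' i : S, klTerm (P i) (Q i) := by
  have hQ := summable_of_tsum_eq_one hQ1
  calc -1 ≤ -∑' i : S, Q i := neg_le_neg (hQ1 ▸ hQ.tsum_subtype_le Q S hQ0)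
    _ = ∑' i : S, -Q i := tsum_neg.symm
    _ ≤ ∑' i : S, klTerm (P i) (Q i) :=
      (hQ.subtype S).neg.tsum_le_tsum (fun i => neg_le_klTerm (hP0 i) (hQ0 i) (habs i))
        (hf.subtype S)

lemma neg_mul_tsum_subtype_le_tsum_subtype_klTerm (hQ0 : ∀ i, 0 ≤ Q i)
    (habs : ∀ i, Q i = 0 → P i = 0) (hP : Summable P)
    (hf : Summable fun i => klTerm (P i) (Q i)) {s : ℝ} {B : Set ι}
    (hB : ∀ i ∈ B, Q i < P i * 2 ^ s) :
    -s * ∑' i : B, P i ≤ ∑' i : B, klTerm (P i) (Q i) := by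
  rw [← tsum_mul_left]
  exact ((hP.subtype B).mul_left _).tsum_le_tsum
    (fun i => neg_mul_le_klTerm_of_lt (hQ0 i) (habs i) (hB i i.2)) (hf.subtype B)

lemma tsum_subtype_compl_le_of_tsum_klTerm_eq (hP0 : ∀ i, 0 ≤ P i)
    (hP1 : ∑' i, P i = 1) (hQ0 : ∀ i, 0 ≤ Q i) (hQ1 : ∑' i, Q i = 1)
    (habs : ∀ i, Q i = 0 → P i = 0) (hf : Summable fun i => klTerm (P i) (Q i))
    {a : ℝ} (ha : ∑' i, klTerm (P i) (Q i) = a) {ε : ℝ} (hε : 0 < ε) :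
    ∑' i : ({i | P i * 2 ^ (-(a + 1) / ε) ≤ Q i}ᶜ : Set ι), P i ≤ ε := by
  set S : Set ι := {i | P i * 2 ^ (-(a + 1) / ε) ≤ Q i}
  have hP := summable_of_tsum_eq_one hP1
  have ha0 : 0 ≤ a := ha ▸ tsum_klTerm_nonneg hP0 hQ0 habs hP (summable_of_tsum_eq_one hQ1)
    (hP1.trans hQ1.symm) hf
  have hgood := neg_one_le_tsum_subtype_klTerm hP0 hQ0 habs hQ1 hf S
  have hbad := neg_mul_tsum_subtype_le_tsum_subtype_klTerm hQ0 habs hP hf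
    (B := Sᶜ) fun i hi => not_le.1 hi
  have hsplit := hf.tsum_subtype_add_tsum_subtype_compl S
  rw [neg_div, neg_neg] at hbad
  rw [ha] at hsplit
  have : (a + 1) * ((∑' i : ↥Sᶜ, P i) / ε) ≤ (a + 1) * 1 := by
    rw [mul_div_assoc', mul_div_right_comm]; linarith
  exact (div_le_one hε).1 (le_of_mul_le_mul_left this (by linarith))

end

/-- Substate Theorem: Let `P, Q` be probability distributions on `ℕ` with
finite KL-divergence `a = D(P‖Q)` (in bits) and `ε ∈ (0,1)`. If
`Good = {i : P(i)·2^{-(a+1)/ε} ≤ Q(i)}` and `X ~ P`, then `Pr[X ∈ Good] ≥ 1 - ε`. -/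
theorem stmt8 (P Q : ℕ → ℝ)
    (hP0 : ∀ i, 0 ≤ P i) (hP1 : ∑' i, P i = 1)
    (hQ0 : ∀ i, 0 ≤ Q i) (hQ1 : ∑' i, Q i = 1)
    (habs : ∀ i, Q i = 0 → P i = 0)
    (hsum : Summable fun i => if P i = 0 then 0 else P i * Real.logb 2 (P i / Q i))
    (a : ℝ) (ha : a = ∑' i, if P i = 0 then 0 else P i * Real.logb 2 (P i / Q i))
    (ε : ℝ) (hε : ε ∈ Set.Ioo (0 : ℝ) 1) :
    (1 : ℝ) - ε ≤ ∑' i : {i : ℕ // P i * (2 : ℝ) ^ (-(a + 1) / ε) ≤ Q i}, P i.1 := by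
  have hbad := tsum_subtype_compl_le_of_tsum_klTerm_eq hP0 hP1 hQ0 hQ1 habs hsum ha.symm hε.1
  have hsplit := (summable_of_tsum_eq_one hP1).tsum_subtype_add_tsum_subtype_compl
    {i | P i * (2 : ℝ) ^ (-(a + 1) / ε) ≤ Q i}
  rw [hP1] at hsplit
  show 1 - ε ≤ ∑' i : ↥{i | P i * (2 : ℝ) ^ (-(a + 1) / ε) ≤ Q i}, P i
  linarith
end
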